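/- Let 𝒜 be a unital associative algebra over ℂ, let A, H ∈ 𝒜, let z ∈ ℂ, and suppose A − z·1 is invertible with inverse R = (A − z·1)^{−1}. Define iterated commutators by ad_A^{(0)}(H) = H and ad_A^{(k+1)}(H) = ad_A^{(k)}(H)·A − A·ad_A^{(k)}(H). Then H·R − R·H = −(1/2)·(R²·ad_A^{(1)}(H) + ad_A^{(1)}(H)·R²) + (1/2)·R²·ad_A^{(3)}(H)·R². -/

import Mathlib

/-- Iterated commutator: `ad_A^(0)(H) = H`, `ad_A^(k+1)(H) = ad_A^(k)(H)·A − A·ad_A^(k)(H)`. -/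
def adIter {A : Type*} [Ring A] (a h : A) : ℕ → A
  | 0 => h
  | k + 1 => adIter a h k * a - a * adIter a h k

/-!
Put `b = A - z` and `C = [H, b] = [H, A]`. From `b R = R b = 1` one gets `[H, R] = -R C R`, and
expanding `ad_b^(2)(C) = C b² - 2 b C b + b² C` gives `R² ad_b^(2)(C) R² = R² C + C R² - 2 R C R`.
Since `z` is central, `ad_A = ad_b`, so `ad_A^(3)(H) = ad_b^(2)(C)` and the identity is a
rearrangement of these two formulas.
-/

theorem adIter_adIter {A : Type*} [Ring A] (a h : A) (m n : ℕ) :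
    adIter a (adIter a h m) n = adIter a h (n + m) := by
  induction n with
  | zero => simp [adIter]
  | succ n ih => rw [Nat.add_right_comm, adIter, adIter, ih]

theorem adIter_sub_algebraMap {𝕜 A : Type*} [CommSemiring 𝕜] [Ring A] [Algebra 𝕜 A]
    (a h : A) (c : 𝕜) (k : ℕ) : adIter (a - algebraMap 𝕜 A c) h k = adIter a h k := by
  induction k with
  | zero => rfl
  | succ k ih =>
    rw [adIter, adIter, ih, mul_sub, sub_mul, Algebra.commutes c]
    abel

section Resolvent

variable {A : Type*} [Ring A] {b r : A}

theorem mul_sub_mul_eq_neg_mul_adIter_one_mul (hbr : b * r = 1) (hrb : r * b = 1) (h : A) :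
    h * r - r * h = -(r * adIter b h 1 * r) := by
  calc h * r - r * h = (r * b) * h * r - r * h * (b * r) := by rw [hbr, hrb, one_mul, mul_one]
    _ = -(r * adIter b h 1 * r) := by simp only [adIter]; noncomm_ring

theorem sq_mul_adIter_two_mul_sq (hbr : b * r = 1) (hrb : r * b = 1) (c : A) :
    r ^ 2 * adIter b c 2 * r ^ 2 = r ^ 2 * c + c * r ^ 2 - 2 • (r * c * r) := by
  have hl (x : A) : b * (r * x) = x := by rw [← mul_assoc, hbr, one_mul]
  have hr (x : A) : r * (b * x) = x := by rw [← mul_assoc, hrb, one_mul]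
  simp only [adIter, pow_two, mul_sub, sub_mul, mul_assoc, hl, hr, hbr, mul_one]
  abel

end Resolvent

/-- Symmetrized resolvent-commutator identity: if `R = (A − z)⁻¹` then
`[H, R] = −(1/2)(R²[H,A] + [H,A]R²) + (1/2) R² ad_A^{(3)}(H) R²`. -/
theorem stmt16 {𝒜 : Type*} [Ring 𝒜] [Algebra ℂ 𝒜] (A H : 𝒜) (z : ℂ) (R : 𝒜)
    (hR₁ : (A - algebraMap ℂ 𝒜 z) * R = 1)
    (hR₂ : R * (A - algebraMap ℂ 𝒜 z) = 1) :
    H * R - R * H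
      = -((1 / 2 : ℂ) • (R ^ 2 * adIter A H 1 + adIter A H 1 * R ^ 2))
        + (1 / 2 : ℂ) • (R ^ 2 * adIter A H 3 * R ^ 2) := by
  set b := A - algebraMap ℂ 𝒜 z
  have had (k : ℕ) : adIter A H k = adIter b H k := (adIter_sub_algebraMap A H z k).symm
  rw [had, had, ← adIter_adIter b H 1 2, sq_mul_adIter_two_mul_sq hR₁ hR₂,
    mul_sub_mul_eq_neg_mul_adIter_one_mul hR₁ hR₂]
  module
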